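/- Let α ≠ 0, σ ∈ (1/2, 5/6), and R > 0. There exists a constant C = C(α,σ,R) such that for every β with |β| ≤ 1 and all nonnegative measurable f₁, f₂, f₃ ∈ L²(ℝ²), ∫_{ℝ⁴} 1_{{|ξ₁|+|ξ₂|+|ξ₃| ≤ R}} · f₁(ξ₁,τ₁) f₂(ξ₂,τ₂) f₃(ξ₃,τ₃) / (⟨L₁⟩^{1/2} ⟨L₂⟩^{1/2} ⟨L₃⟩^{1-σ}) dξ₁ dτ₁ dξ₂ dτ₂ ≤ C ‖f₁‖_{L²} ‖f₂‖_{L²} ‖f₃‖_{L²}. -/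

import Mathlib

/-!
Write `x = (ξ₁, τ₁)` and `y = (ξ₂, τ₂)`. Cauchy–Schwarz in `(x, y)` separates `f₁(x) f₃(-x - y)`,
whose `L²` norm is `‖f₁‖ ‖f₃‖` by translation invariance, from `f₂(y)` divided by the weight
`⟨L₁⟩^{1/2} ⟨L₂⟩^{1/2} ⟨L₃⟩^{1-σ}`. For `σ ≤ 5/6` the square of the reciprocal weight is at most
`⟨L₁⟩^{-4/3} + ⟨L₃⟩^{-4/3}`. With `y` and `ξ₁` fixed, `L₁` and `-L₃` are translates of `τ₁`, so
integrating either term in `τ₁` gives the finite constant `∫ ⟨t⟩^{-4/3} dt`, and the frequency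
restriction `|ξ₁| ≤ R` contributes the factor `2R`.
-/

open MeasureTheory

noncomputable def jb (x : ℝ) : ℝ := Real.sqrt (1 + x ^ 2)

noncomputable def l2n (f : ℝ × ℝ → ℝ) : ENNReal :=
  (∫⁻ q : ℝ × ℝ, ENNReal.ofReal (f q ^ 2)) ^ (1/2 : ℝ)

open scoped ENNReal

lemma one_le_jb (x : ℝ) : 1 ≤ jb x :=
  Real.one_le_sqrt.mpr (le_add_of_nonneg_right (sq_nonneg x))

lemma jb_pos (x : ℝ) : 0 < jb x := one_pos.trans_le (one_le_jb x)

lemma jb_neg (x : ℝ) : jb (-x) = jb x := by simp [jb]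

@[fun_prop]
lemma measurable_jb : Measurable jb := by unfold jb; fun_prop

lemma jb_rpow (x r : ℝ) : jb x ^ r = (1 + ‖x‖ ^ 2) ^ (r / 2) := by
  rw [jb, Real.sqrt_eq_rpow, ← Real.rpow_mul (by positivity), Real.norm_eq_abs, sq_abs]
  ring_nf

lemma integrable_jb_rpow_neg {r : ℝ} (hr : 1 < r) : Integrable (fun x : ℝ ↦ jb x ^ (-r)) := by
  simp_rw [jb_rpow]
  exact integrable_rpow_neg_one_add_norm_sq (by simpa using hr)

lemma inv_rpow_mul_rpow_le {a b p q r : ℝ} (ha : 1 ≤ a) (hb : 1 ≤ b) (hp : 0 ≤ p) (hq : 0 ≤ q)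
    (hr : r ≤ p + q) : (a ^ p * b ^ q)⁻¹ ≤ a ^ (-r) + b ^ (-r) := by
  have hmin : 1 ≤ min a b := le_min ha hb
  have hmin_pos : 0 < min a b := one_pos.trans_le hmin
  have key : min a b ^ r ≤ a ^ p * b ^ q :=
    calc min a b ^ r ≤ min a b ^ (p + q) := Real.rpow_le_rpow_of_exponent_le hmin hr
      _ = min a b ^ p * min a b ^ q := Real.rpow_add hmin_pos p q
      _ ≤ a ^ p * b ^ q := by
        gcongr
        exacts [min_le_left a b, min_le_right a b]
  calc (a ^ p * b ^ q)⁻¹ ≤ (min a b ^ r)⁻¹ := inv_anti₀ (Real.rpow_pos_of_pos hmin_pos r) key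
    _ = min a b ^ (-r) := (Real.rpow_neg hmin_pos.le r).symm
    _ ≤ a ^ (-r) + b ^ (-r) := by
      rcases min_choice a b with h | h <;> rw [h]
      · exact le_add_of_nonneg_right (by positivity)
      · exact le_add_of_nonneg_left (by positivity)

lemma inv_jb_mul_sq_le {σ : ℝ} (hσ : σ ≤ 5/6) (x y z : ℝ) :
    ((jb x ^ (1/2 : ℝ) * jb y ^ (1/2 : ℝ) * jb z ^ (1 - σ))⁻¹) ^ 2 ≤
      jb x ^ (-(4/3 : ℝ)) + jb z ^ (-(4/3 : ℝ)) := by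
  have sq_rpow : ∀ t s : ℝ, (jb t ^ s) ^ 2 = jb t ^ (2 * s) := fun t s ↦ by
    rw [mul_comm, Real.rpow_mul (jb_pos t).le, Real.rpow_two]
  have hy : 1 ≤ jb y := one_le_jb y
  calc ((jb x ^ (1/2 : ℝ) * jb y ^ (1/2 : ℝ) * jb z ^ (1 - σ))⁻¹) ^ 2
      = (jb x ^ (1 : ℝ) * jb y * jb z ^ (2 * (1 - σ)))⁻¹ := by
        rw [inv_pow, mul_pow, mul_pow, sq_rpow, sq_rpow, sq_rpow]
        norm_num
    _ ≤ (jb x ^ (1 : ℝ) * jb z ^ (2 * (1 - σ)))⁻¹ := by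
        have hz := Real.rpow_pos_of_pos (jb_pos z) (2 * (1 - σ))
        have hx := Real.rpow_pos_of_pos (jb_pos x) 1
        gcongr
        exact le_mul_of_one_le_right hx.le hy
    _ ≤ jb x ^ (-(4/3 : ℝ)) + jb z ^ (-(4/3 : ℝ)) :=
        inv_rpow_mul_rpow_le (one_le_jb x) (one_le_jb z) zero_le_one (by linarith) (by linarith)

lemma lintegral_real_four_le (F : ℝ × ℝ × ℝ × ℝ → ℝ≥0∞) :
    ∫⁻ p, F p ≤ ∫⁻ x : ℝ × ℝ, ∫⁻ y : ℝ × ℝ, F (x.1, x.2, y.1, y.2) := by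
  have h := (measurePreserving_prodAssoc (volume : Measure ℝ) volume
    (volume : Measure (ℝ × ℝ))).lintegral_comp_emb MeasurableEquiv.prodAssoc.measurableEmbedding F
  exact h.symm.trans_le (lintegral_prod_le _)

section CauchySchwarz

variable {G : Type*} [AddGroup G] [MeasurableSpace G] [MeasurableNeg G]
  {μ : Measure G} [μ.IsAddLeftInvariant] [μ.IsNegInvariant]

lemma lintegral_lintegral_sq_comp_neg_sub [MeasurableAdd G] {g₁ g₃ : G → ℝ≥0∞}
    (hg₁ : Measurable g₁) (hg₃ : Measurable g₃) :
    ∫⁻ x, ∫⁻ y, (g₁ x * g₃ (-x - y)) ^ 2 ∂μ ∂μ = (∫⁻ x, g₁ x ^ 2 ∂μ) * ∫⁻ x, g₃ x ^ 2 ∂μ := by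
  have inner (x : G) : ∫⁻ y, (g₁ x * g₃ (-x - y)) ^ 2 ∂μ = g₁ x ^ 2 * ∫⁻ z, g₃ z ^ 2 ∂μ := by
    rw [← lintegral_const_mul _ (hg₃.pow_const 2)]
    exact lintegral_sub_left_eq_self (fun z ↦ (g₁ x * g₃ z) ^ 2) (-x) |>.trans
      (lintegral_congr fun z ↦ mul_pow _ _ 2)
  simp_rw [inner]
  exact lintegral_mul_const _ (hg₁.pow_const 2)

lemma lintegral_lintegral_mul_comp_neg_sub_le [MeasurableAdd₂ G] [SFinite μ]
    {g₁ g₃ : G → ℝ≥0∞} {h : G → G → ℝ≥0∞} (hg₁ : Measurable g₁) (hg₃ : Measurable g₃)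
    (hh : Measurable (Function.uncurry h)) :
    ∫⁻ x, ∫⁻ y, g₁ x * g₃ (-x - y) * h x y ∂μ ∂μ ≤
      (∫⁻ x, g₁ x ^ 2 ∂μ) ^ (1/2 : ℝ) * (∫⁻ x, g₃ x ^ 2 ∂μ) ^ (1/2 : ℝ) *
        (∫⁻ p, h p.1 p.2 ^ 2 ∂μ.prod μ) ^ (1/2 : ℝ) := by
  have hG : Measurable fun p : G × G ↦ g₁ p.1 * g₃ (-p.1 - p.2) := by fun_prop
  have holder := ENNReal.lintegral_mul_le_Lp_mul_Lq (μ.prod μ) Real.HolderConjugate.two_two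
    hG.aemeasurable hh.aemeasurable
  simp only [ENNReal.rpow_two, Pi.mul_apply] at holder
  calc ∫⁻ x, ∫⁻ y, g₁ x * g₃ (-x - y) * h x y ∂μ ∂μ
      = ∫⁻ p, g₁ p.1 * g₃ (-p.1 - p.2) * h p.1 p.2 ∂μ.prod μ :=
        (lintegral_prod _ (hG.mul hh).aemeasurable).symm
    _ ≤ (∫⁻ p, (g₁ p.1 * g₃ (-p.1 - p.2)) ^ 2 ∂μ.prod μ) ^ (1/2 : ℝ) *
        (∫⁻ p, h p.1 p.2 ^ 2 ∂μ.prod μ) ^ (1/2 : ℝ) := holder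
    _ = _ := by
      rw [lintegral_prod _ (hG.pow_const 2).aemeasurable]
      dsimp only
      rw [lintegral_lintegral_sq_comp_neg_sub hg₁ hg₃, ENNReal.mul_rpow_of_nonneg _ _ (by norm_num)]

end CauchySchwarz

noncomputable def jbDecay (t : ℝ) : ℝ≥0∞ := ENNReal.ofReal (jb t ^ (-(4/3 : ℝ)))

@[fun_prop]
lemma measurable_jbDecay : Measurable jbDecay := by unfold jbDecay; fun_prop

lemma lintegral_jbDecay_ne_top : ∫⁻ t, jbDecay t ≠ ⊤ :=
  (integrable_jb_rpow_neg (by norm_num)).lintegral_lt_top.ne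

def strip (R : ℝ) : Set (ℝ × ℝ) := {x | |x.1| ≤ R}

@[simp]
lemma mem_strip {R : ℝ} {x : ℝ × ℝ} : x ∈ strip R ↔ |x.1| ≤ R := Iff.rfl

lemma measurableSet_strip (R : ℝ) : MeasurableSet (strip R) :=
  measurableSet_le (by fun_prop) measurable_const

@[fun_prop]
lemma Measurable.indicator_strip {f : ℝ × ℝ → ℝ≥0∞} (hf : Measurable f) (R : ℝ) :
    Measurable fun x ↦ (strip R).indicator f x :=
  hf.indicator (measurableSet_strip R)

lemma lintegral_indicator_strip (R : ℝ) {w : ℝ → ℝ≥0∞} (hw : Measurable w) {c : ℝ → ℝ}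
    (hc : Measurable c) :
    ∫⁻ x : ℝ × ℝ, (strip R).indicator (fun x ↦ w (x.2 - c x.1)) x =
      ENNReal.ofReal (2 * R) * ∫⁻ t, w t := by
  have fiber (ξ : ℝ) : ∫⁻ τ, (strip R).indicator (fun x ↦ w (x.2 - c x.1)) (ξ, τ) =
      (Set.Icc (-R) R).indicator (fun _ ↦ ∫⁻ t, w t) ξ := by
    by_cases hξ : |ξ| ≤ R
    · rw [Set.indicator_of_mem (Set.mem_Icc.mpr (abs_le.mp hξ))]
      exact (lintegral_congr fun τ ↦ Set.indicator_of_mem (show (ξ, τ) ∈ strip R from hξ) _).trans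
        (lintegral_sub_right_eq_self w (c ξ))
    · rw [Set.indicator_of_notMem (by simpa [abs_le] using hξ)]
      exact (lintegral_congr fun τ ↦
        Set.indicator_of_notMem (show (ξ, τ) ∉ strip R from hξ) _).trans lintegral_zero
  have hF : Measurable fun x ↦ (strip R).indicator (fun x ↦ w (x.2 - c x.1)) x := by fun_prop
  rw [Measure.volume_eq_prod, lintegral_prod _ hF.aemeasurable]
  simp_rw [fiber]
  rw [lintegral_indicator_const measurableSet_Icc, Real.volume_Icc, mul_comm]
  ring_nf

def phase (α β ξ : ℝ) : ℝ := α * ξ ^ 3 - β * ξ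

@[fun_prop]
lemma measurable_phase (α β : ℝ) : Measurable (phase α β) := by unfold phase; fun_prop

/-- `⟨L₁⟩^{1/2} ⟨L₂⟩^{1/2} ⟨L₃⟩^{1-σ}` at `x = (ξ₁, τ₁)`, `y = (ξ₂, τ₂)`. -/
noncomputable def modulationWeight (α β σ : ℝ) (x y : ℝ × ℝ) : ℝ :=
  jb (x.2 - phase α β x.1) ^ (1/2 : ℝ) * jb (y.2 - (-α * y.1 ^ 3 + β * y.1)) ^ (1/2 : ℝ) *
    jb ((-x.2 - y.2) - phase α β (-x.1 - y.1)) ^ (1 - σ)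

noncomputable def stripKernel (α β σ R : ℝ) (g : ℝ × ℝ → ℝ≥0∞) (x y : ℝ × ℝ) : ℝ≥0∞ :=
  (strip R).indicator (fun x ↦ g y * ENNReal.ofReal (modulationWeight α β σ x y)⁻¹) x

lemma measurable_stripKernel (α β σ R : ℝ) {g : ℝ × ℝ → ℝ≥0∞} (hg : Measurable g) :
    Measurable (Function.uncurry (stripKernel α β σ R g)) := by
  classical
  simp only [Function.uncurry_def, stripKernel, Set.indicator_apply, mem_strip]
  exact Measurable.ite (measurableSet_le (by fun_prop) measurable_const)
    (by unfold modulationWeight; fun_prop) measurable_const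

/-- The argument of the second `jbDecay` is `-L₃`, written as `τ₁` minus a function of `(ξ₁, y)`. -/
lemma stripKernel_sq_le (α β R : ℝ) {σ : ℝ} (hσ : σ ≤ 5/6) (g : ℝ × ℝ → ℝ≥0∞) (x y : ℝ × ℝ) :
    stripKernel α β σ R g x y ^ 2 ≤
      ((strip R).indicator (fun x ↦ jbDecay (x.2 - phase α β x.1)) x +
       (strip R).indicator (fun x ↦ jbDecay (x.2 - (-y.2 - phase α β (-x.1 - y.1)))) x) *
        g y ^ 2 := by
  by_cases hx : x ∈ strip R
  · have hw : 0 ≤ (modulationWeight α β σ x y)⁻¹ := by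
      unfold modulationWeight
      exact inv_nonneg.2 (mul_nonneg (mul_nonneg (Real.rpow_nonneg (jb_pos _).le _)
        (Real.rpow_nonneg (jb_pos _).le _)) (Real.rpow_nonneg (jb_pos _).le _))
    have hL₃ : jb (x.2 - (-y.2 - phase α β (-x.1 - y.1))) =
        jb ((-x.2 - y.2) - phase α β (-x.1 - y.1)) := by
      rw [← jb_neg]; ring_nf
    simp only [stripKernel, jbDecay, Set.indicator_of_mem hx]
    rw [mul_pow, ← ENNReal.ofReal_pow hw, mul_comm _ (g y ^ 2),
      ← ENNReal.ofReal_add (Real.rpow_nonneg (jb_pos _).le _) (Real.rpow_nonneg (jb_pos _).le _),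
      hL₃]
    gcongr
    exact inv_jb_mul_sq_le hσ _ _ _
  · simp [stripKernel, Set.indicator_of_notMem hx]

lemma lintegral_stripKernel_sq_le (α β R : ℝ) {σ : ℝ} (hσ : σ ≤ 5/6) {g : ℝ × ℝ → ℝ≥0∞}
    (hg : Measurable g) :
    ∫⁻ p : (ℝ × ℝ) × (ℝ × ℝ), stripKernel α β σ R g p.1 p.2 ^ 2 ≤
      2 * ENNReal.ofReal (2 * R) * (∫⁻ t, jbDecay t) * ∫⁻ y, g y ^ 2 := by
  have fiber (y : ℝ × ℝ) :
      ∫⁻ x : ℝ × ℝ,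
        ((strip R).indicator (fun x ↦ jbDecay (x.2 - phase α β x.1)) x +
         (strip R).indicator (fun x ↦ jbDecay (x.2 - (-y.2 - phase α β (-x.1 - y.1)))) x) *
          g y ^ 2 =
      2 * ENNReal.ofReal (2 * R) * (∫⁻ t, jbDecay t) * g y ^ 2 := by
    have hA : Measurable fun ξ ↦ phase α β ξ := by fun_prop
    have hB : Measurable fun ξ ↦ -y.2 - phase α β (-ξ - y.1) := by fun_prop
    rw [lintegral_mul_const _ (by fun_prop), lintegral_add_left (by fun_prop),
      lintegral_indicator_strip R measurable_jbDecay hA,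
      lintegral_indicator_strip R measurable_jbDecay hB]
    ring
  calc ∫⁻ p : (ℝ × ℝ) × (ℝ × ℝ), stripKernel α β σ R g p.1 p.2 ^ 2
      = ∫⁻ y, ∫⁻ x, stripKernel α β σ R g x y ^ 2 :=
        lintegral_prod_symm _ ((measurable_stripKernel α β σ R hg).pow_const 2).aemeasurable
    _ ≤ ∫⁻ y, 2 * ENNReal.ofReal (2 * R) * (∫⁻ t, jbDecay t) * g y ^ 2 :=
        lintegral_mono fun y ↦ (lintegral_mono fun x ↦ stripKernel_sq_le α β R hσ g x y).trans
          (fiber y).le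
    _ = _ := lintegral_const_mul _ (hg.pow_const 2)

lemma ofReal_ite_div_modulationWeight_le {α β σ R : ℝ} {f₁ f₂ f₃ : ℝ × ℝ → ℝ}
    (h₁ : ∀ q, 0 ≤ f₁ q) (h₂ : ∀ q, 0 ≤ f₂ q) (h₃ : ∀ q, 0 ≤ f₃ q) (x y : ℝ × ℝ) :
    ENNReal.ofReal (if |x.1| + |y.1| + |-x.1 - y.1| ≤ R then
        f₁ x * f₂ y * f₃ (-x - y) / modulationWeight α β σ x y else 0) ≤
      ENNReal.ofReal (f₁ x) * ENNReal.ofReal (f₃ (-x - y)) *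
        stripKernel α β σ R (fun q ↦ ENNReal.ofReal (f₂ q)) x y := by
  split_ifs with h
  · have hx : x ∈ strip R := by
      have := abs_nonneg y.1; have := abs_nonneg (-x.1 - y.1)
      simp only [mem_strip]; linarith
    rw [stripKernel, Set.indicator_of_mem hx, ← ENNReal.ofReal_mul (h₂ y),
      ← ENNReal.ofReal_mul (h₁ x), ← ENNReal.ofReal_mul (mul_nonneg (h₁ x) (h₃ _))]
    apply le_of_eq; congr 1; ring
  · simp

lemma l2n_eq {f : ℝ × ℝ → ℝ} (hf : ∀ q, 0 ≤ f q) :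
    l2n f = (∫⁻ q, ENNReal.ofReal (f q) ^ 2) ^ (1/2 : ℝ) := by
  simp_rw [l2n, ENNReal.ofReal_pow (hf _)]

theorem stmt19_general (α σ R : ℝ) (hσ₂ : σ < 5/6) :
    ∃ C : ℝ, 0 < C ∧
      ∀ β : ℝ, |β| ≤ 1 →
        ∀ f₁ f₂ f₃ : ℝ × ℝ → ℝ,
          Measurable f₁ → Measurable f₂ → Measurable f₃ →
          (∀ q, 0 ≤ f₁ q) → (∀ q, 0 ≤ f₂ q) → (∀ q, 0 ≤ f₃ q) →
          MemLp f₁ 2 volume → MemLp f₂ 2 volume → MemLp f₃ 2 volume →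
          (∫⁻ p : ℝ × ℝ × ℝ × ℝ,
            ENNReal.ofReal (
              let ξ₁ := p.1; let τ₁ := p.2.1; let ξ₂ := p.2.2.1; let τ₂ := p.2.2.2
              let ξ₃ := -ξ₁ - ξ₂; let τ₃ := -τ₁ - τ₂
              let L₁ := τ₁ - (α * ξ₁ ^ 3 - β * ξ₁)
              let L₂ := τ₂ - (-α * ξ₂ ^ 3 + β * ξ₂)
              let L₃ := τ₃ - (α * ξ₃ ^ 3 - β * ξ₃)
              if |ξ₁| + |ξ₂| + |ξ₃| ≤ R then
                f₁ (ξ₁, τ₁) * f₂ (ξ₂, τ₂) * f₃ (ξ₃, τ₃) /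
                  (jb L₁ ^ (1/2 : ℝ) * jb L₂ ^ (1/2 : ℝ) * jb L₃ ^ (1 - σ))
              else 0)) ≤
          ENNReal.ofReal C * l2n f₁ * l2n f₂ * l2n f₃ := by
  set K : ℝ≥0∞ := (2 * ENNReal.ofReal (2 * R) * ∫⁻ t, jbDecay t) ^ (1/2 : ℝ)
  have hK : K ≠ ⊤ := ENNReal.rpow_ne_top_of_nonneg (by norm_num)
    (ENNReal.mul_ne_top (by finiteness) lintegral_jbDecay_ne_top)
  refine ⟨K.toReal + 1, by positivity, fun β _ f₁ f₂ f₃ hm₁ hm₂ hm₃ h₁ h₂ h₃ _ _ _ ↦ ?_⟩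
  set k := stripKernel α β σ R (fun q ↦ ENNReal.ofReal (f₂ q))
  calc _ ≤ ∫⁻ x : ℝ × ℝ, ∫⁻ y : ℝ × ℝ,
          ENNReal.ofReal (f₁ x) * ENNReal.ofReal (f₃ (-x - y)) * k x y :=
        (lintegral_real_four_le _).trans (lintegral_mono fun x ↦ lintegral_mono fun y ↦
          ofReal_ite_div_modulationWeight_le h₁ h₂ h₃ x y)
    _ ≤ l2n f₁ * l2n f₃ * (∫⁻ p : (ℝ × ℝ) × (ℝ × ℝ), k p.1 p.2 ^ 2) ^ (1/2 : ℝ) := by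
        rw [l2n_eq h₁, l2n_eq h₃]
        exact lintegral_lintegral_mul_comp_neg_sub_le (by fun_prop) (by fun_prop)
          (measurable_stripKernel _ _ _ _ (by fun_prop))
    _ ≤ l2n f₁ * l2n f₃ * (K * l2n f₂) := by
        rw [l2n_eq h₂, ← ENNReal.mul_rpow_of_nonneg _ _ (by norm_num)]
        gcongr
        exact lintegral_stripKernel_sq_le α β R hσ₂.le (by fun_prop)
    _ = K * l2n f₁ * l2n f₂ * l2n f₃ := by ring
    _ ≤ ENNReal.ofReal (K.toReal + 1) * l2n f₁ * l2n f₂ * l2n f₃ := by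
        gcongr
        exact (ENNReal.le_ofReal_iff_toReal_le hK (by positivity)).2 (by linarith)

theorem stmt19 (α σ R : ℝ) (hα : α ≠ 0) (hσ₁ : 1/2 < σ) (hσ₂ : σ < 5/6) (hR : 0 < R) :
    ∃ C : ℝ, 0 < C ∧
      ∀ β : ℝ, |β| ≤ 1 →
        ∀ f₁ f₂ f₃ : ℝ × ℝ → ℝ,
          Measurable f₁ → Measurable f₂ → Measurable f₃ →
          (∀ q, 0 ≤ f₁ q) → (∀ q, 0 ≤ f₂ q) → (∀ q, 0 ≤ f₃ q) →
          MemLp f₁ 2 volume → MemLp f₂ 2 volume → MemLp f₃ 2 volume →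
          (∫⁻ p : ℝ × ℝ × ℝ × ℝ,
            ENNReal.ofReal (
              let ξ₁ := p.1; let τ₁ := p.2.1; let ξ₂ := p.2.2.1; let τ₂ := p.2.2.2
              let ξ₃ := -ξ₁ - ξ₂; let τ₃ := -τ₁ - τ₂
              let L₁ := τ₁ - (α * ξ₁ ^ 3 - β * ξ₁)
              let L₂ := τ₂ - (-α * ξ₂ ^ 3 + β * ξ₂)
              let L₃ := τ₃ - (α * ξ₃ ^ 3 - β * ξ₃)
              if |ξ₁| + |ξ₂| + |ξ₃| ≤ R then
                f₁ (ξ₁, τ₁) * f₂ (ξ₂, τ₂) * f₃ (ξ₃, τ₃) /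
                  (jb L₁ ^ (1/2 : ℝ) * jb L₂ ^ (1/2 : ℝ) * jb L₃ ^ (1 - σ))
              else 0)) ≤
          ENNReal.ofReal C * l2n f₁ * l2n f₂ * l2n f₃ :=
  stmt19_general α σ R hσ₂
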